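/- For f ∈ O, f satisfies B²f = f if and only if for every nonzero p ∈ ℝⁿ₊ there exists q₀ ∈ ℝⁿ₊ such that f(p) = inf { f(r) : r ∈ ℝⁿ₊, ⟨r,q₀⟩ = ⟨p,q₀⟩ }. -/
import Mathlib


open Finset

noncomputable def inn {n : ℕ} (p q : Fin n → ℝ) : ℝ := ∑ i, p i * q i

noncomputable def nrm {n : ℕ} (p : Fin n → ℝ) : ℝ := Real.sqrt (∑ i, (p i)^2)

def Orth (n : ℕ) : Set (Fin n → ℝ) := {p | ∀ i, 0 ≤ p i}

noncomputable def B {n : ℕ} (f : (Fin n → ℝ) → ℝ) (p : Fin n → ℝ) : ℝ :=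
  sSup {x | ∃ q ∈ Orth n, q ≠ 0 ∧ x = inn p q / f q}

def MemO {n : ℕ} (f : (Fin n → ℝ) → ℝ) : Prop :=
  (∀ p ∈ Orth n, ∀ l : ℝ, 0 < l → f (l • p) = l * f p) ∧
  (∀ p ∈ Orth n, p ≠ 0 → 0 < f p) ∧
  (∃ c₁ c₂ : ℝ, 0 < c₁ ∧ 0 < c₂ ∧
    ∀ p ∈ Orth n, c₁ * nrm p ≤ f p ∧ f p ≤ c₂ * nrm p) ∧
  ContinuousOn f (Orth n)

def PositiveConvex {n : ℕ} (C : Set (Fin n → ℝ)) : Prop :=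
  Convex ℝ C ∧ ∀ p₀ ∈ Orth n, p₀ ∉ C → ∃ q ∈ Orth n, ∃ γ : ℝ, 0 < γ ∧
    γ ≤ inn p₀ q ∧ ∀ p ∈ C, inn p q < γ

section Aux
variable {n : ℕ}

lemma inn_comm (p q : Fin n → ℝ) : inn p q = inn q p :=
  Finset.sum_congr rfl fun i _ => mul_comm _ _

lemma inn_nonneg {p q : Fin n → ℝ} (hp : p ∈ Orth n) (hq : q ∈ Orth n) : 0 ≤ inn p q :=
  Finset.sum_nonneg fun i _ => mul_nonneg (hp i) (hq i)

lemma inn_smul_left (l : ℝ) (p q : Fin n → ℝ) : inn (l • p) q = l * inn p q := by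
  unfold inn; rw [Finset.mul_sum]; exact Finset.sum_congr rfl fun i _ => by
    simp [mul_assoc]

lemma inn_smul_right (l : ℝ) (p q : Fin n → ℝ) : inn p (l • q) = l * inn p q := by
  rw [inn_comm, inn_smul_left, inn_comm]

lemma nrm_nonneg (p : Fin n → ℝ) : 0 ≤ nrm p := Real.sqrt_nonneg _

lemma nrm_zero : nrm (0 : Fin n → ℝ) = 0 := by simp [nrm]

lemma inn_self_eq_sq (p : Fin n → ℝ) : inn p p = nrm p ^ 2 := by
  rw [nrm, Real.sq_sqrt (Finset.sum_nonneg fun i _ => sq_nonneg _)]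
  exact Finset.sum_congr rfl fun i _ => (sq (p i)).symm

lemma nrm_pos {p : Fin n → ℝ} (hp : p ≠ 0) : 0 < nrm p := by
  have : ∃ i, p i ≠ 0 := by
    by_contra h; push_neg at h; exact hp (funext h)
  obtain ⟨i, hi⟩ := this
  apply Real.sqrt_pos.2
  have h1 : (0:ℝ) < (p i)^2 := by positivity
  exact lt_of_lt_of_le h1 (Finset.single_le_sum (fun j _ => sq_nonneg (p j)) (Finset.mem_univ i))

lemma inn_self_pos {p : Fin n → ℝ} (hp : p ≠ 0) : 0 < inn p p := by
  rw [inn_self_eq_sq]; exact pow_pos (nrm_pos hp) 2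

lemma cs (p q : Fin n → ℝ) : inn p q ≤ nrm p * nrm q := by
  have h := Finset.sum_mul_sq_le_sq_mul_sq Finset.univ p q
  have h2 : inn p q ≤ |inn p q| := le_abs_self _
  calc inn p q ≤ |inn p q| := h2
    _ = Real.sqrt ((inn p q)^2) := (Real.sqrt_sq_eq_abs _).symm
    _ ≤ Real.sqrt ((∑ i, (p i)^2) * ∑ i, (q i)^2) := Real.sqrt_le_sqrt h
    _ = nrm p * nrm q := Real.sqrt_mul (Finset.sum_nonneg fun i _ => sq_nonneg _) _

end Aux

section BFacts
variable {n : ℕ} {f : (Fin n → ℝ) → ℝ} {c₁ : ℝ}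

lemma inn_sub_left (p p' q : Fin n → ℝ) : inn (p - p') q = inn p q - inn p' q := by
  unfold inn; rw [← Finset.sum_sub_distrib]
  exact Finset.sum_congr rfl fun i _ => by simp [sub_mul]

lemma zero_mem_Orth : (0 : Fin n → ℝ) ∈ Orth n := fun i => le_refl 0

lemma f_pos_of (hc₁ : 0 < c₁) (hb : ∀ q ∈ Orth n, c₁ * nrm q ≤ f q)
    {q : Fin n → ℝ} (hq : q ∈ Orth n) (hq0 : q ≠ 0) : 0 < f q :=
  lt_of_lt_of_le (mul_pos hc₁ (nrm_pos hq0)) (hb q hq)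

lemma f_nonneg_of (hc₁ : 0 < c₁) (hb : ∀ q ∈ Orth n, c₁ * nrm q ≤ f q)
    {q : Fin n → ℝ} (hq : q ∈ Orth n) : 0 ≤ f q :=
  le_trans (mul_nonneg hc₁.le (nrm_nonneg _)) (hb q hq)

lemma elem_le (hc₁ : 0 < c₁) (hb : ∀ q ∈ Orth n, c₁ * nrm q ≤ f q)
    {p q : Fin n → ℝ} (hp : p ∈ Orth n) (hq : q ∈ Orth n) (hq0 : q ≠ 0) :
    inn p q / f q ≤ nrm p / c₁ := by
  have hfq : 0 < f q := f_pos_of hc₁ hb hq hq0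
  have hnq : 0 < nrm q := nrm_pos hq0
  rw [div_le_div_iff₀ hfq hc₁]
  calc inn p q * c₁ ≤ (nrm p * nrm q) * c₁ := by
        exact mul_le_mul_of_nonneg_right (cs p q) hc₁.le
    _ = nrm p * (c₁ * nrm q) := by ring
    _ ≤ nrm p * f q := mul_le_mul_of_nonneg_left (hb q hq) (nrm_nonneg p)

lemma B_bddAbove (hc₁ : 0 < c₁) (hb : ∀ q ∈ Orth n, c₁ * nrm q ≤ f q)
    {p : Fin n → ℝ} (hp : p ∈ Orth n) :
    BddAbove {x | ∃ q ∈ Orth n, q ≠ 0 ∧ x = inn p q / f q} := by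
  refine ⟨nrm p / c₁, fun x hx => ?_⟩
  obtain ⟨q, hq, hq0, rfl⟩ := hx
  exact elem_le hc₁ hb hp hq hq0

lemma le_B (hc₁ : 0 < c₁) (hb : ∀ q ∈ Orth n, c₁ * nrm q ≤ f q)
    {p q : Fin n → ℝ} (hp : p ∈ Orth n) (hq : q ∈ Orth n) (hq0 : q ≠ 0) :
    inn p q / f q ≤ B f p :=
  le_csSup (B_bddAbove hc₁ hb hp) ⟨q, hq, hq0, rfl⟩

lemma B_pos (hc₁ : 0 < c₁) (hb : ∀ q ∈ Orth n, c₁ * nrm q ≤ f q)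
    {p : Fin n → ℝ} (hp : p ∈ Orth n) (hp0 : p ≠ 0) : 0 < B f p := by
  refine lt_of_lt_of_le ?_ (le_B hc₁ hb hp hp hp0)
  exact div_pos (inn_self_pos hp0) (f_pos_of hc₁ hb hp hp0)

lemma B_set_nonempty [Nonempty (Fin n)] (p : Fin n → ℝ) :
    {x | ∃ q ∈ Orth n, q ≠ 0 ∧ x = inn p q / f q}.Nonempty := by
  refine ⟨inn p (fun _ => 1) / f (fun _ => 1), fun _ => 1, fun i => zero_le_one, ?_, rfl⟩
  intro h
  have := congrFun h (Classical.arbitrary _)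
  simp at this

lemma B_le (hc₁ : 0 < c₁) (hb : ∀ q ∈ Orth n, c₁ * nrm q ≤ f q) [Nonempty (Fin n)]
    {p : Fin n → ℝ} (hp : p ∈ Orth n) : B f p ≤ nrm p / c₁ := by
  refine csSup_le (B_set_nonempty p) ?_
  rintro x ⟨q, hq, hq0, rfl⟩
  exact elem_le hc₁ hb hp hq hq0

lemma B_nonneg (hc₁ : 0 < c₁) (hb : ∀ q ∈ Orth n, c₁ * nrm q ≤ f q) [Nonempty (Fin n)]
    {p : Fin n → ℝ} (hp : p ∈ Orth n) : 0 ≤ B f p := by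
  rcases eq_or_ne p 0 with rfl | hp0
  · refine le_trans ?_ (le_B hc₁ hb zero_mem_Orth (fun _ => zero_le_one : (fun _ => (1:ℝ)) ∈ Orth n) ?_)
    · have : inn (0 : Fin n → ℝ) (fun _ => 1) = 0 := by simp [inn]
      rw [this]; simp
    · intro h
      have := congrFun h (Classical.arbitrary _)
      simp at this
  · exact (B_pos hc₁ hb hp hp0).le

lemma B_homog (hc₁ : 0 < c₁) (hb : ∀ q ∈ Orth n, c₁ * nrm q ≤ f q) [Nonempty (Fin n)]
    {p : Fin n → ℝ} (hp : p ∈ Orth n) {l : ℝ} (hl : 0 < l) :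
    B f (l • p) = l * B f p := by
  have hlp : l • p ∈ Orth n := fun i => by
    simpa using mul_nonneg hl.le (hp i)
  apply le_antisymm
  · refine csSup_le (B_set_nonempty _) ?_
    rintro x ⟨q, hq, hq0, rfl⟩
    rw [inn_smul_left, mul_div_assoc]
    exact mul_le_mul_of_nonneg_left (le_B hc₁ hb hp hq hq0) hl.le
  · rw [← le_div_iff₀' hl]
    refine csSup_le (B_set_nonempty _) ?_
    rintro x ⟨q, hq, hq0, rfl⟩
    rw [le_div_iff₀' hl, ← mul_div_assoc, ← inn_smul_left]
    exact le_B hc₁ hb hlp hq hq0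

lemma B_lip (hc₁ : 0 < c₁) (hb : ∀ q ∈ Orth n, c₁ * nrm q ≤ f q) [Nonempty (Fin n)]
    {p p' : Fin n → ℝ} (hp : p ∈ Orth n) (hp' : p' ∈ Orth n) :
    B f p ≤ B f p' + nrm (p - p') / c₁ := by
  refine csSup_le (B_set_nonempty _) ?_
  rintro x ⟨q, hq, hq0, rfl⟩
  have hfq : 0 < f q := f_pos_of hc₁ hb hq hq0
  have h1 : inn p q = inn p' q + inn (p - p') q := by
    rw [inn_sub_left]; ring
  rw [h1, add_div]
  refine add_le_add (le_B hc₁ hb hp' hq hq0) ?_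
  calc inn (p - p') q / f q ≤ nrm (p - p') / c₁ := ?_
    _ ≤ nrm (p - p') / c₁ := le_refl _
  rw [div_le_div_iff₀ hfq hc₁]
  calc inn (p - p') q * c₁ ≤ (nrm (p - p') * nrm q) * c₁ :=
        mul_le_mul_of_nonneg_right (cs _ _) hc₁.le
    _ = nrm (p - p') * (c₁ * nrm q) := by ring
    _ ≤ nrm (p - p') * f q := mul_le_mul_of_nonneg_left (hb q hq) (nrm_nonneg _)

lemma nrm_le_sqrt_mul (v : Fin n → ℝ) : nrm v ≤ Real.sqrt n * ‖v‖ := by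
  rw [← Real.sqrt_sq (norm_nonneg v), ← Real.sqrt_mul (Nat.cast_nonneg n)]
  apply Real.sqrt_le_sqrt
  calc ∑ i, (v i)^2 ≤ ∑ _i : Fin n, ‖v‖^2 := by
        refine Finset.sum_le_sum fun i _ => ?_
        have h1 : |v i| ≤ ‖v‖ := by simpa using norm_le_pi_norm v i
        nlinarith [sq_abs (v i), abs_nonneg (v i)]
    _ = n * ‖v‖^2 := by simp [Finset.card_univ]

lemma B_continuousOn (hc₁ : 0 < c₁) (hb : ∀ q ∈ Orth n, c₁ * nrm q ≤ f q) [Nonempty (Fin n)] :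
    ContinuousOn (B f) (Orth n) := by
  have key : ∀ p ∈ Orth n, ∀ p' ∈ Orth n,
      dist (B f p) (B f p') ≤ (Real.sqrt n / c₁) * dist p p' := by
    intro p hp p' hp'
    have h1 := B_lip hc₁ hb hp hp'
    have h2 := B_lip hc₁ hb hp' hp
    have e1 : nrm (p - p') ≤ Real.sqrt n * dist p p' := by
      rw [dist_eq_norm]; exact nrm_le_sqrt_mul _
    have e2 : nrm (p' - p) ≤ Real.sqrt n * dist p p' := by
      rw [dist_comm, dist_eq_norm]; exact nrm_le_sqrt_mul _
    have E1 : nrm (p - p') / c₁ ≤ Real.sqrt n / c₁ * dist p p' := by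
      rw [div_mul_eq_mul_div]; gcongr
    have E2 : nrm (p' - p) / c₁ ≤ Real.sqrt n / c₁ * dist p p' := by
      rw [div_mul_eq_mul_div]; gcongr
    rw [Real.dist_eq, abs_le]
    constructor <;> linarith
  refine LipschitzOnWith.continuousOn (K := Real.toNNReal (Real.sqrt n / c₁)) ?_
  rw [lipschitzOnWith_iff_dist_le_mul]
  intro x hx y hy
  refine le_trans (key x hx y hy) ?_
  gcongr
  exact Real.le_coe_toNNReal _

end BFacts

section Main
variable {n : ℕ}

lemma orth_closed : IsClosed (Orth n) := by
  have : Orth n = ⋂ i, {q : Fin n → ℝ | 0 ≤ q i} := by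
    ext q; simp [Orth, Set.mem_iInter]
  rw [this]
  exact isClosed_iInter fun i => isClosed_le continuous_const (continuous_apply i)

lemma smul_mem_orth {l : ℝ} (hl : 0 ≤ l) {r : Fin n → ℝ} (hr : r ∈ Orth n) :
    l • r ∈ Orth n := fun i => by simpa using mul_nonneg hl (hr i)

lemma sum_pos_of_orth {q : Fin n → ℝ} (hq : q ∈ Orth n) (hq0 : q ≠ 0) :
    0 < ∑ i, q i := by
  have : ∃ i, q i ≠ 0 := by
    by_contra h; push_neg at h; exact hq0 (funext h)
  obtain ⟨i, hi⟩ := this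
  exact Finset.sum_pos' (fun j _ => hq j) ⟨i, Finset.mem_univ i, lt_of_le_of_ne (hq i) (Ne.symm hi)⟩

def Splx (n : ℕ) : Set (Fin n → ℝ) := {q | q ∈ Orth n ∧ ∑ i, q i = 1}

lemma splx_ne_zero {q : Fin n → ℝ} (hq : q ∈ Splx n) : q ≠ 0 := by
  rintro rfl
  have h := hq.2
  simp at h

lemma splx_compact : IsCompact (Splx n) := by
  apply Metric.isCompact_of_isClosed_isBounded
  · exact IsClosed.inter orth_closed (isClosed_eq (by continuity) continuous_const)
  · apply Bornology.IsBounded.subset (Metric.isBounded_closedBall (x := (0 : Fin n → ℝ)) (r := 1))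
    intro q hq
    rw [Metric.mem_closedBall, dist_zero_right]
    refine pi_norm_le_iff_of_nonneg zero_le_one |>.2 fun i => ?_
    rw [Real.norm_eq_abs, abs_of_nonneg (hq.1 i)]
    calc q i ≤ ∑ j, q j := Finset.single_le_sum (fun j _ => hq.1 j) (Finset.mem_univ i)
      _ = 1 := hq.2

lemma splx_nonempty [Nonempty (Fin n)] : (Splx n).Nonempty := by
  refine ⟨fun _ => (n : ℝ)⁻¹, fun i => ?_, ?_⟩
  · show (0:ℝ) ≤ (n : ℝ)⁻¹
    exact inv_nonneg.2 (Nat.cast_nonneg n)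
  have hn : (n : ℝ) ≠ 0 := by
    have : 0 < n := Fin.pos_iff_nonempty.2 ‹_›
    positivity
  simp [Finset.sum_const, Finset.card_univ, hn]

end Main

theorem B_sq_fixed_iff_hyperplane {n : ℕ} (f : (Fin n → ℝ) → ℝ) (hf : MemO f) :
    (∀ p ∈ Orth n, B (B f) p = f p) ↔
      ∀ p ∈ Orth n, p ≠ 0 → ∃ q₀ ∈ Orth n,
        f p = sInf {x | ∃ r ∈ Orth n, inn r q₀ = inn p q₀ ∧ x = f r} := by
  obtain ⟨hhom, hpos, ⟨c₁, c₂, hc₁, hc₂, hb⟩, hcont⟩ := hf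
  have hb1 : ∀ q ∈ Orth n, c₁ * nrm q ≤ f q := fun q hq => (hb q hq).1
  have hf0 : f 0 = 0 := le_antisymm (by simpa [nrm_zero] using (hb 0 zero_mem_Orth).2)
    (f_nonneg_of hc₁ hb1 zero_mem_Orth)
  rcases isEmpty_or_nonempty (Fin n) with hn | hn
  · constructor
    · intro _ p hp hp0
      exact absurd (funext fun i => isEmptyElim i) hp0
    · intro _ p hp
      have hp0 : p = 0 := funext fun i => isEmptyElim i
      subst hp0
      have hempty : {x | ∃ q ∈ Orth n, q ≠ 0 ∧ x = inn (0 : Fin n → ℝ) q / B f q} = ∅ := by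
        ext x
        simp only [Set.mem_setOf_eq, Set.mem_empty_iff_false, iff_false]
        rintro ⟨q, hq, hq0, rfl⟩
        exact hq0 (funext fun i => isEmptyElim i)
      rw [B, hempty, Real.sSup_empty, hf0]
  -- Nonempty (Fin n). Basic facts about g := B f
  have hc₂' : (0:ℝ) < c₂⁻¹ := inv_pos.2 hc₂
  have hgb : ∀ q ∈ Orth n, c₂⁻¹ * nrm q ≤ B f q := by
    intro q hq
    rcases eq_or_ne q 0 with rfl | hq0
    · simpa [nrm_zero] using B_nonneg hc₁ hb1 zero_mem_Orth
    · refine le_trans ?_ (le_B hc₁ hb1 hq hq hq0)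
      have hfq : 0 < f q := f_pos_of hc₁ hb1 hq hq0
      rw [inn_self_eq_sq, le_div_iff₀ hfq]
      calc c₂⁻¹ * nrm q * f q ≤ c₂⁻¹ * nrm q * (c₂ * nrm q) := by
            exact mul_le_mul_of_nonneg_left ((hb q hq).2)
              (mul_nonneg (inv_nonneg.2 hc₂.le) (nrm_nonneg q))
        _ = nrm q ^ 2 * (c₂⁻¹ * c₂) := by ring
        _ = nrm q ^ 2 := by rw [inv_mul_cancel₀ hc₂.ne', mul_one]
  have hB2le : ∀ p ∈ Orth n, B (B f) p ≤ f p := by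
    intro p hp
    rcases eq_or_ne p 0 with rfl | hp0
    · rw [hf0]
      refine csSup_le (B_set_nonempty _) ?_
      rintro x ⟨q, hq, hq0, rfl⟩
      have h0 : inn (0 : Fin n → ℝ) q = 0 := by simp [inn]
      rw [h0, zero_div]
    · refine csSup_le (B_set_nonempty _) ?_
      rintro x ⟨q, hq, hq0, rfl⟩
      have hgq : 0 < B f q := B_pos hc₁ hb1 hq hq0
      rw [div_le_iff₀ hgq]
      have h1 : inn q p / f p ≤ B f q := le_B hc₁ hb1 hq hp hp0
      have hfp : 0 < f p := hpos p hp hp0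
      rw [div_le_iff₀ hfp] at h1
      calc inn p q = inn q p := inn_comm p q
        _ ≤ B f q * f p := h1
        _ = f p * B f q := mul_comm _ _
  constructor
  · -- forward
    intro hfix p hp hp0
    have hfp : 0 < f p := hpos p hp hp0
    set φ : (Fin n → ℝ) → ℝ := fun q => inn p q / B f q with hφ
    have hφcont : ContinuousOn φ (Splx n) := by
      apply ContinuousOn.div
      · exact Continuous.continuousOn (by
          unfold inn
          exact continuous_finset_sum _ fun i _ => continuous_const.mul (continuous_apply i))
      · exact (B_continuousOn hc₁ hb1).mono fun q (hq : q ∈ Splx n) => hq.1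
      · intro q hq
        exact (B_pos hc₁ hb1 hq.1 (splx_ne_zero hq)).ne'
    obtain ⟨q₀, hq₀K, hq₀max⟩ := splx_compact.exists_isMaxOn splx_nonempty hφcont
    have hq₀O : q₀ ∈ Orth n := hq₀K.1
    have hq₀0 : q₀ ≠ 0 := splx_ne_zero hq₀K
    have hg0 : 0 < B f q₀ := B_pos hc₁ hb1 hq₀O hq₀0
    have hle : B (B f) p ≤ φ q₀ := by
      refine csSup_le (B_set_nonempty _) ?_
      rintro x ⟨q, hq, hq0, rfl⟩
      have hs : 0 < ∑ i, q i := sum_pos_of_orth hq hq0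
      have hq' : (∑ i, q i)⁻¹ • q ∈ Splx n := by
        refine ⟨smul_mem_orth (by positivity) hq, ?_⟩
        simp only [Pi.smul_apply, smul_eq_mul, ← Finset.mul_sum]
        exact inv_mul_cancel₀ hs.ne'
      have hval : φ ((∑ i, q i)⁻¹ • q) = inn p q / B f q := by
        rw [hφ]
        simp only
        rw [inn_smul_right, B_homog hc₁ hb1 hq (inv_pos.2 hs)]
        rw [mul_div_mul_left _ _ (inv_pos.2 hs).ne']
      rw [← hval]
      exact hq₀max hq'
    have hge : φ q₀ ≤ B (B f) p := le_B hc₂' hgb hp hq₀O hq₀0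
    have hfpφ : f p = φ q₀ := by
      rw [← hfix p hp]; exact le_antisymm hle hge
    refine ⟨q₀, hq₀O, ?_⟩
    have hpq₀ : 0 < inn p q₀ := by
      rcases (inn_nonneg hp hq₀O).lt_or_eq with h | h
      · exact h
      · exfalso
        rw [hfpφ, hφ] at hfp
        simp only [← h, zero_div] at hfp
        exact lt_irrefl 0 hfp
    apply le_antisymm
    · refine le_csInf ⟨f p, p, hp, rfl, rfl⟩ ?_
      rintro x ⟨r, hr, hrq, rfl⟩
      have hr0 : r ≠ 0 := by
        rintro rfl
        rw [show inn (0 : Fin n → ℝ) q₀ = 0 by simp [inn]] at hrq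
        linarith
      have hfr : 0 < f r := hpos r hr hr0
      have h1 : inn q₀ r / f r ≤ B f q₀ := le_B hc₁ hb1 hq₀O hr hr0
      rw [div_le_iff₀ hfr] at h1
      rw [inn_comm q₀ r, hrq] at h1
      rw [hfpφ, hφ]
      simp only
      rw [div_le_iff₀ hg0]
      nlinarith
    · refine csInf_le ⟨0, ?_⟩ ⟨p, hp, rfl, rfl⟩
      rintro x ⟨r, hr, _, rfl⟩
      exact f_nonneg_of hc₁ hb1 hr
  · -- backward
    intro hhyp p hp
    rcases eq_or_ne p 0 with rfl | hp0
    · have h1 := hB2le 0 zero_mem_Orth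
      rw [hf0] at h1 ⊢
      exact le_antisymm h1 (B_nonneg hc₂' hgb zero_mem_Orth)
    · obtain ⟨q₀, hq₀O, hEq⟩ := hhyp p hp hp0
      have hfp : 0 < f p := hpos p hp hp0
      have hTbdd : BddBelow {x | ∃ r ∈ Orth n, inn r q₀ = inn p q₀ ∧ x = f r} := by
        refine ⟨0, ?_⟩
        rintro x ⟨r, hr, _, rfl⟩
        exact f_nonneg_of hc₁ hb1 hr
      have hpq₀ : 0 < inn p q₀ := by
        rcases (inn_nonneg hp hq₀O).lt_or_eq with h | h
        · exact h
        · exfalso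
          have hmem : (0:ℝ) ∈ {x | ∃ r ∈ Orth n, inn r q₀ = inn p q₀ ∧ x = f r} :=
            ⟨0, zero_mem_Orth, by rw [← h]; simp [inn], hf0.symm⟩
          have h2 : sInf {x | ∃ r ∈ Orth n, inn r q₀ = inn p q₀ ∧ x = f r} ≤ 0 :=
            csInf_le hTbdd hmem
          rw [← hEq] at h2
          linarith
      have hq₀0 : q₀ ≠ 0 := by
        rintro rfl
        rw [show inn p (0 : Fin n → ℝ) = 0 by simp [inn]] at hpq₀
        exact lt_irrefl 0 hpq₀
      have hg0 : 0 < B f q₀ := B_pos hc₁ hb1 hq₀O hq₀0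
      have hkey : B f q₀ ≤ inn p q₀ / f p := by
        refine csSup_le (B_set_nonempty _) ?_
        rintro x ⟨r, hr, hr0, rfl⟩
        have hfr : 0 < f r := hpos r hr hr0
        rcases (inn_nonneg hq₀O hr).lt_or_eq with hqr | hqr
        · set l := inn p q₀ / inn q₀ r with hl
          have hlpos : 0 < l := div_pos hpq₀ hqr
          have hinn : inn (l • r) q₀ = inn p q₀ := by
            rw [inn_smul_left, inn_comm r q₀, hl]
            field_simp
          have hmem : f (l • r) ∈ {x | ∃ r ∈ Orth n, inn r q₀ = inn p q₀ ∧ x = f r} :=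
            ⟨l • r, smul_mem_orth hlpos.le hr, hinn, rfl⟩
          have h3 : f p ≤ f (l • r) := by
            rw [hEq]; exact csInf_le hTbdd hmem
          rw [hhom r hr l hlpos, hl] at h3
          rw [div_le_div_iff₀ hfr hfp]
          calc inn q₀ r * f p ≤ inn q₀ r * (inn p q₀ / inn q₀ r * f r) :=
                mul_le_mul_of_nonneg_left h3 hqr.le
            _ = inn p q₀ * f r := by field_simp
        · rw [← hqr, zero_div]
          exact div_nonneg hpq₀.le hfp.le
      have h4 : f p ≤ inn p q₀ / B f q₀ := by
        rw [le_div_iff₀ hg0]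
        rw [le_div_iff₀ hfp] at hkey
        nlinarith [hkey]
      have h5 : inn p q₀ / B f q₀ ≤ B (B f) p := le_B hc₂' hgb hp hq₀O hq₀0
      exact le_antisymm (hB2le p hp) (le_trans h4 h5)
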